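/- arXiv:1804.04390 — 4 statements merged into one kernel-verified Lean document; each statement's English description precedes it below -/
import Mathlib

section
/- Direct sum decomposition of the Adini 1-form shape space in 3D: In the space ℝ[x,y,z]³ of polynomial vector fields, let P := {(p₁,p₂,p₃) : each pᵢ has total degree ≤ 2}, let J := span{(−xyz, x²z, 0), (−y²z, xyz, 0), (0, −xyz, xy²), (0, −xz², xyz), (−xyz, 0, x²y), (−yz², 0, xyz)}, and let D := span of the gradients ∇q for q ∈ {x³y, x³z, x²yz, x³yz, y³z, xy³, xy²z, xy³z, yz³, xz³, xyz², xyz³}. Then the sum P + J + D is direct, i.e. P ∩ (J + D) = 0 and J ∩ D = 0; equivalently, dim(P + J + D) = 30 + 6 + 12 = 48. -/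
open MvPolynomial

noncomputable section

/-- Polynomials in three variables `x, y, z` over `ℝ`. -/
abbrev M3 : Type := MvPolynomial (Fin 3) ℝ

def x : M3 := X 0
def y : M3 := X 1
def z : M3 := X 2

/-- The gradient of a scalar polynomial. -/
def grad3 (q : M3) : Fin 3 → M3 := ![pderiv 0 q, pderiv 1 q, pderiv 2 q]

/-- Vector fields whose components all have total degree at most 2. -/
def Pspace : Submodule ℝ (Fin 3 → M3) :=
  Submodule.pi Set.univ fun _ => restrictTotalDegree (Fin 3) ℝ 2

/-- The space `J` spanned by the six special vector fields. -/
def Jspace : Submodule ℝ (Fin 3 → M3) :=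
  Submodule.span ℝ
    {![-(x * y * z), x ^ 2 * z, 0], ![-(y ^ 2 * z), x * y * z, 0],
      ![0, -(x * y * z), x * y ^ 2], ![0, -(x * z ^ 2), x * y * z],
      ![-(x * y * z), 0, x ^ 2 * y], ![-(y * z ^ 2), 0, x * y * z]}

/-- The space `D` spanned by the twelve gradient fields. -/
def Dspace : Submodule ℝ (Fin 3 → M3) :=
  Submodule.span ℝ
    (grad3 '' {x ^ 3 * y, x ^ 3 * z, x ^ 2 * y * z, x ^ 3 * y * z,
      y ^ 3 * z, x * y ^ 3, x * y ^ 2 * z, x * y ^ 3 * z,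
      y * z ^ 3, x * z ^ 3, x * y * z ^ 2, x * y * z ^ 3})

/-!
Every field in `J` or `D` has components all of whose monomials have degree at least 3
(`J` is cubic, `D` consists of gradients of quartics and quintics), so `J + D` meets `P`
only in `0`.

For `J ∩ D`, pair a field `v` with the position vector: `v ↦ x v₀ + y v₁ + z v₂`.
This pairing kills `J`, while on a gradient `∇q` it is the Euler operator `∑ xᵢ ∂ᵢ q`,
which multiplies the coefficient of each monomial of degree `d` by `d`. Hence a gradient
in its kernel comes from a constant and vanishes.
-/

theorem Submodule.disjoint_pi_univ {ι R : Type*} {φ : ι → Type*} [Semiring R]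
    [∀ i, AddCommMonoid (φ i)] [∀ i, Module R (φ i)] {p q : ∀ i, Submodule R (φ i)}
    (h : ∀ i, Disjoint (p i) (q i)) :
    Disjoint (Submodule.pi Set.univ p) (Submodule.pi Set.univ q) := by
  rw [Submodule.disjoint_def]
  intro v hp hq
  funext i
  exact Submodule.disjoint_def.mp (h i) _ (hp i trivial) (hq i trivial)

namespace MvPolynomial

variable {σ R : Type*} [CommSemiring R]

theorem disjoint_restrictTotalDegree_restrictSupport_lt_degree (m : ℕ) :
    Disjoint (restrictTotalDegree σ R m) (restrictSupport R {d | m < d.degree}) := by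
  rw [Submodule.disjoint_def]
  intro p hlow hhigh
  rw [← support_eq_empty, ← Finset.coe_eq_empty, Set.eq_empty_iff_forall_notMem]
  exact fun d hd => (hhigh hd).not_ge (show d.degree ≤ m from hlow hd)

theorem IsHomogeneous.mem_restrictSupport_lt_degree {p : MvPolynomial σ R} {m n : ℕ}
    (hp : p.IsHomogeneous n) (hmn : m < n) : p ∈ restrictSupport R {d | m < d.degree} := by
  intro d hd
  by_contra hd'
  exact mem_support_iff.mp hd (hp.coeff_eq_zero (by rintro rfl; exact hd' hmn))

theorem coeff_sum_X_mul_pderiv [Fintype σ] (p : MvPolynomial σ R) (m : σ →₀ ℕ) :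
    coeff m (∑ i, X i * pderiv i p) = m.degree • coeff m p := by
  classical
  induction p using MvPolynomial.induction_on' with
  | add p q hp hq =>
    simp only [map_add, mul_add, Finset.sum_add_distrib, coeff_add, hp, hq, smul_add]
  | monomial n r =>
    simp only [X_mul_pderiv_monomial, ← Finset.sum_smul, ← Finsupp.degree_eq_sum, coeff_smul,
      coeff_monomial]
    split_ifs with h <;> simp [h]

theorem pderiv_eq_zero_of_sum_X_mul_pderiv_eq_zero [Fintype σ] [IsAddTorsionFree R]
    {p : MvPolynomial σ R} (h : ∑ i, X i * pderiv i p = 0) (i : σ) : pderiv i p = 0 := by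
  ext m
  have hdeg : (m + Finsupp.single i 1).degree ≠ 0 := by simp
  have hcoeff := coeff_sum_X_mul_pderiv p (m + Finsupp.single i 1)
  rw [h, coeff_zero, eq_comm, nsmul_eq_zero_iff_right hdeg] at hcoeff
  rw [coeff_pderiv, hcoeff, zero_mul, coeff_zero]

def grad : MvPolynomial σ R →ₗ[R] σ → MvPolynomial σ R :=
  LinearMap.pi fun i => (pderiv i).toLinearMap

def eulerPairing [Fintype σ] : (σ → MvPolynomial σ R) →ₗ[R] MvPolynomial σ R where
  toFun v := ∑ i, X i * v i
  map_add' v w := by simp only [Pi.add_apply, mul_add, Finset.sum_add_distrib]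
  map_smul' r v := by
    simp only [Pi.smul_apply, mul_smul_comm, Finset.smul_sum, RingHom.id_apply]

theorem disjoint_ker_eulerPairing_range_grad [Fintype σ] [IsAddTorsionFree R] :
    Disjoint (LinearMap.ker (eulerPairing (σ := σ) (R := R))) (LinearMap.range grad) := by
  rw [Submodule.disjoint_def]
  rintro _ hker ⟨p, rfl⟩
  funext i
  exact pderiv_eq_zero_of_sum_X_mul_pderiv_eq_zero hker i

end MvPolynomial

theorem grad3_eq_grad (q : M3) : grad3 q = grad q := by
  funext i
  fin_cases i <;> rfl

theorem Jspace_le_ker_eulerPairing : Jspace ≤ LinearMap.ker eulerPairing := by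
  rw [Jspace, Submodule.span_le]
  intro v hv
  simp only [Set.mem_insert_iff, Set.mem_singleton_iff] at hv
  rcases hv with rfl | rfl | rfl | rfl | rfl | rfl <;>
    simp only [SetLike.mem_coe, LinearMap.mem_ker, eulerPairing, LinearMap.coe_mk, AddHom.coe_mk,
      Fin.sum_univ_three, Matrix.cons_val_zero, Matrix.cons_val_one, Matrix.cons_val_two,
      Matrix.head_cons, Matrix.tail_cons, x, y, z] <;> ring

theorem Dspace_le_range_grad : Dspace ≤ LinearMap.range grad := by
  rw [Dspace, Submodule.span_le]
  rintro _ ⟨q, -, rfl⟩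
  exact ⟨q, (grad3_eq_grad q).symm⟩

def highDegreeFields : Submodule ℝ (Fin 3 → M3) :=
  Submodule.pi Set.univ fun _ => restrictSupport ℝ {d | 2 < d.degree}

theorem disjoint_Pspace_highDegreeFields : Disjoint Pspace highDegreeFields :=
  Submodule.disjoint_pi_univ fun _ => disjoint_restrictTotalDegree_restrictSupport_lt_degree 2

theorem Jspace_le_highDegreeFields : Jspace ≤ highDegreeFields := by
  rw [Jspace, Submodule.span_le]
  intro v hv
  simp only [Set.mem_insert_iff, Set.mem_singleton_iff] at hv
  rcases hv with rfl | rfl | rfl | rfl | rfl | rfl <;>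
  · intro i _
    fin_cases i <;> first
      | exact zero_mem _
      | exact IsHomogeneous.mem_restrictSupport_lt_degree
          (by repeat' first | apply IsHomogeneous.neg | apply isHomogeneous_X_pow
                            | apply IsHomogeneous.mul | apply isHomogeneous_X)
          (by norm_num)

theorem grad3_mem_highDegreeFields {q : M3} {n : ℕ} (hq : q.IsHomogeneous n) (hn : 3 < n) :
    grad3 q ∈ highDegreeFields := by
  intro i _
  rw [grad3_eq_grad]
  exact hq.pderiv.mem_restrictSupport_lt_degree (by omega)

theorem Dspace_le_highDegreeFields : Dspace ≤ highDegreeFields := by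
  rw [Dspace, Submodule.span_le]
  rintro _ ⟨q, hq, rfl⟩
  simp only [Set.mem_insert_iff, Set.mem_singleton_iff] at hq
  rcases hq with rfl | rfl | rfl | rfl | rfl | rfl | rfl | rfl | rfl | rfl | rfl | rfl <;>
    exact grad3_mem_highDegreeFields
      (by repeat' first | apply isHomogeneous_X_pow | apply IsHomogeneous.mul
                        | apply isHomogeneous_X)
      (by norm_num)

/-- Direct sum decomposition of the Adini 1-form shape space in 3D:
the sum `P + J + D` is direct. -/
theorem adini_one_form_direct_sum :
    Pspace ⊓ (Jspace ⊔ Dspace) = ⊥ ∧ Jspace ⊓ Dspace = ⊥ :=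
  ⟨(disjoint_Pspace_highDegreeFields.mono_right
      (sup_le Jspace_le_highDegreeFields Dspace_le_highDegreeFields)).eq_bot,
    (disjoint_ker_eulerPairing_range_grad.mono Jspace_le_ker_eulerPairing
      Dspace_le_range_grad).eq_bot⟩

end
end

section
/- Characterization of the bubble space B^x_K: In ℝ[x,y,z], let Q^x := span{x^i y^j z^k : 0 ≤ i ≤ 2, 0 ≤ j ≤ 1, 0 ≤ k ≤ 1}, B^x := span{(x²−1)(y²−1), x(x²−1)(y²−1), (x²−1)(z²−1), y(x²−1)(z²−1)}, and A^x := Q^x + B^x. A polynomial v ∈ A^x satisfies v(ε₁,ε₂,ε₃) = 0 for all ε₁,ε₂,ε₃ ∈ {−1,1} and ∫_{−1}^{1} v(t,ε,δ) dt = 0 for all ε,δ ∈ {−1,1} if and only if v ∈ B^x. -/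
open MvPolynomial

noncomputable section

/-- `Q^x := span{x^i y^j z^k : i ≤ 2, j ≤ 1, k ≤ 1}`. -/
def Qx : Submodule ℝ M3 :=
  Submodule.span ℝ
    {p : M3 | ∃ i j k : ℕ, i ≤ 2 ∧ j ≤ 1 ∧ k ≤ 1 ∧ p = x ^ i * y ^ j * z ^ k}

/-- `B^x := span{(x²−1)(y²−1), x(x²−1)(y²−1), (x²−1)(z²−1), y(x²−1)(z²−1)}`. -/
def Bx : Submodule ℝ M3 :=
  Submodule.span ℝ
    {(x ^ 2 - 1) * (y ^ 2 - 1), x * (x ^ 2 - 1) * (y ^ 2 - 1),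
      (x ^ 2 - 1) * (z ^ 2 - 1), y * (x ^ 2 - 1) * (z ^ 2 - 1)}

/-- `A^x := Q^x + B^x`. -/
def Ax : Submodule ℝ M3 := Qx ⊔ Bx

/-!
Every element of `B^x` vanishes identically on the four edges parallel to the `x`-axis, so for
`v = q + b` with `q ∈ Q^x`, `b ∈ B^x` the conditions only concern `q`. On such an edge `q` is a
quadratic in `t` vanishing at `t = ±1` with zero integral, hence zero; its three coefficients are
bilinear in `(y, z)` and vanish at the four corners of `[-1, 1]²`, hence all coefficients of `q`
vanish.
-/

lemma integral_quadratic (f : Fin 3 → ℝ) :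
    ∫ t in (-1 : ℝ)..1, ∑ i, f i * t ^ (i : ℕ) = 2 * f 0 + 2 / 3 * f 2 := by
  simp only [Fin.sum_univ_three, Fin.val_zero, Fin.val_one, Fin.val_two, pow_zero, pow_one,
    mul_one]
  have hi (g : ℝ → ℝ) (hg : Continuous g) : IntervalIntegrable g MeasureTheory.volume (-1) 1 :=
    hg.intervalIntegrable _ _
  rw [intervalIntegral.integral_add (hi _ (by fun_prop)) (hi _ (by fun_prop)),
    intervalIntegral.integral_add (hi _ (by fun_prop)) (hi _ (by fun_prop)),
    intervalIntegral.integral_const_mul, intervalIntegral.integral_const_mul]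
  norm_num
  ring

lemma eq_zero_of_linear_vanishing {f : Fin 2 → ℝ}
    (h : ∀ s ∈ ({-1, 1} : Set ℝ), ∑ j, f j * s ^ (j : ℕ) = 0) : f = 0 := by
  have hm := h (-1) (by simp)
  have hp := h 1 (by simp)
  simp only [Fin.sum_univ_two] at hm hp
  norm_num at hm hp
  ext j; fin_cases j <;> simp <;> linarith

lemma eq_zero_of_quadratic_vanishing {f : Fin 3 → ℝ}
    (h : ∀ s ∈ ({-1, 1} : Set ℝ), ∑ i, f i * s ^ (i : ℕ) = 0)
    (hI : ∫ t in (-1 : ℝ)..1, ∑ i, f i * t ^ (i : ℕ) = 0) : f = 0 := by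
  have hm := h (-1) (by simp)
  have hp := h 1 (by simp)
  rw [integral_quadratic] at hI
  simp only [Fin.sum_univ_three] at hm hp
  norm_num at hm hp
  ext i; fin_cases i <;> simp <;> linarith

lemma eval_eq_zero_of_mem_Bx {b : M3} (hb : b ∈ Bx) (t : ℝ) {ε δ : ℝ}
    (hε : ε ∈ ({-1, 1} : Set ℝ)) (hδ : δ ∈ ({-1, 1} : Set ℝ)) : eval ![t, ε, δ] b = 0 := by
  have hε2 : ε ^ 2 = 1 := by rcases hε with rfl | rfl <;> norm_num
  have hδ2 : δ ^ 2 = 1 := by rcases hδ with rfl | rfl <;> norm_num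
  induction hb using Submodule.span_induction with
  | mem p hp =>
    rcases hp with rfl | rfl | rfl | rfl <;> simp [x, y, z, hε2, hδ2]
  | zero => simp
  | add p q _ _ hp hq => simp [hp, hq]
  | smul r p _ hp => simp [smul_eval, hp]

def qxMonomial (e : Fin 3 × Fin 2 × Fin 2) : M3 := x ^ (e.1 : ℕ) * y ^ (e.2.1 : ℕ) * z ^ (e.2.2 : ℕ)

lemma Qx_eq_span_range : Qx = Submodule.span ℝ (Set.range qxMonomial) := by
  rw [Qx]
  congr 1
  ext p
  constructor
  · rintro ⟨i, j, k, hi, hj, hk, rfl⟩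
    exact ⟨(⟨i, by omega⟩, ⟨j, by omega⟩, ⟨k, by omega⟩), rfl⟩
  · rintro ⟨⟨i, j, k⟩, rfl⟩
    exact ⟨i, j, k, by omega, by omega, by omega, rfl⟩

lemma exists_coeff_of_mem_Qx {q : M3} (hq : q ∈ Qx) :
    ∃ c : Fin 3 → Fin 2 → Fin 2 → ℝ,
      q = ∑ i, ∑ j, ∑ k, c i j k • (x ^ (i : ℕ) * y ^ (j : ℕ) * z ^ (k : ℕ)) := by
  rw [Qx_eq_span_range, Submodule.mem_span_range_iff_exists_fun] at hq
  obtain ⟨c, rfl⟩ := hq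
  exact ⟨fun i j k => c (i, j, k), by simp only [Fintype.sum_prod_type, qxMonomial]⟩

lemma eval_sum_coeff (c : Fin 3 → Fin 2 → Fin 2 → ℝ) (t ε δ : ℝ) :
    eval ![t, ε, δ] (∑ i, ∑ j, ∑ k, c i j k • (x ^ (i : ℕ) * y ^ (j : ℕ) * z ^ (k : ℕ))) =
      ∑ i, (∑ j, (∑ k, c i j k * δ ^ (k : ℕ)) * ε ^ (j : ℕ)) * t ^ (i : ℕ) := by
  simp only [map_sum, smul_eval, eval_mul, eval_pow, x, y, z, eval_X, Finset.sum_mul]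
  refine Finset.sum_congr rfl fun i _ => Finset.sum_congr rfl fun j _ =>
    Finset.sum_congr rfl fun k _ => ?_
  simp only [Matrix.cons_val_zero, Matrix.cons_val_one, Matrix.cons_val_two, Matrix.vecHead,
    Matrix.vecTail, Function.comp_apply, Fin.succ_zero_eq_one]
  ring

lemma eq_zero_of_mem_Qx {q : M3} (hq : q ∈ Qx)
    (hV : ∀ ε₁ ∈ ({-1, 1} : Set ℝ), ∀ ε₂ ∈ ({-1, 1} : Set ℝ), ∀ ε₃ ∈ ({-1, 1} : Set ℝ),
      eval ![ε₁, ε₂, ε₃] q = 0)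
    (hI : ∀ ε ∈ ({-1, 1} : Set ℝ), ∀ δ ∈ ({-1, 1} : Set ℝ),
      (∫ t in (-1 : ℝ)..1, eval ![t, ε, δ] q) = 0) : q = 0 := by
  obtain ⟨c, rfl⟩ := exists_coeff_of_mem_Qx hq
  simp only [eval_sum_coeff] at hV hI
  have h_edge (ε) (hε : ε ∈ ({-1, 1} : Set ℝ)) (δ) (hδ : δ ∈ ({-1, 1} : Set ℝ)) :
      (fun i => ∑ j, (∑ k, c i j k * δ ^ (k : ℕ)) * ε ^ (j : ℕ)) = 0 :=
    eq_zero_of_quadratic_vanishing (fun s hs => hV s hs ε hε δ hδ) (hI ε hε δ hδ)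
  have h_face (i) (δ) (hδ : δ ∈ ({-1, 1} : Set ℝ)) :
      (fun j => ∑ k, c i j k * δ ^ (k : ℕ)) = 0 :=
    eq_zero_of_linear_vanishing fun ε hε => congrFun (h_edge ε hε δ hδ) i
  have hc : c = 0 := by
    ext i j : 2
    exact eq_zero_of_linear_vanishing fun δ hδ => congrFun (h_face i δ hδ) j
  simp [hc]

/-- Characterization of the bubble space `B^x`: a polynomial `v ∈ A^x`
vanishes at the eight vertices of `[−1,1]³` and has vanishing integrals over
the four edges parallel to the `x`-axis if and only if `v ∈ B^x`. -/
theorem bubble_space_characterization (v : M3) (hv : v ∈ Ax) :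
    ((∀ ε₁ ∈ ({-1, 1} : Set ℝ), ∀ ε₂ ∈ ({-1, 1} : Set ℝ), ∀ ε₃ ∈ ({-1, 1} : Set ℝ),
        eval ![ε₁, ε₂, ε₃] v = 0) ∧
      (∀ ε ∈ ({-1, 1} : Set ℝ), ∀ δ ∈ ({-1, 1} : Set ℝ),
        (∫ t in (-1 : ℝ)..1, eval ![t, ε, δ] v) = 0)) ↔ v ∈ Bx := by
  refine ⟨fun ⟨hV, hI⟩ => ?_, fun hb => ⟨?_, ?_⟩⟩
  · obtain ⟨q, hq, b, hb, rfl⟩ := Submodule.mem_sup.mp hv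
    have hq0 : q = 0 := by
      refine eq_zero_of_mem_Qx hq (fun ε₁ h₁ ε₂ h₂ ε₃ h₃ => ?_) fun ε hε δ hδ => ?_
      · simpa [eval_eq_zero_of_mem_Bx hb ε₁ h₂ h₃] using hV ε₁ h₁ ε₂ h₂ ε₃ h₃
      · simpa [eval_eq_zero_of_mem_Bx hb _ hε hδ] using hI ε hε δ hδ
    rwa [hq0, zero_add]
  · exact fun ε₁ _ ε₂ h₂ ε₃ h₃ => eval_eq_zero_of_mem_Bx hb ε₁ h₂ h₃
  · intro ε hε δ hδ
    simp [eval_eq_zero_of_mem_Bx hb _ hε hδ]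

end
end

section
/- Unisolvence of the tensor element Q^x_K: In ℝ[x,y,z], let Q^x := span{x^i y^j z^k : 0 ≤ i ≤ 2, 0 ≤ j ≤ 1, 0 ≤ k ≤ 1}. Suppose v ∈ Q^x satisfies v(ε₁,ε₂,ε₃) = 0 at all eight vertices (ε₁,ε₂,ε₃) ∈ {−1,1}³ and ∫_{−1}^{1} v(t,ε,δ) dt = 0 for all ε,δ ∈ {−1,1}. Then v = 0. -/
open MvPolynomial

noncomputable section

def gQ : Fin 3 × Fin 2 × Fin 2 → M3 := fun p => x ^ (p.1 : ℕ) * y ^ (p.2.1 : ℕ) * z ^ (p.2.2 : ℕ)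

lemma int_helper (A B C : ℝ) : ∫ t in (-1:ℝ)..1, (A + B*t + C*t^2) = 2*A + 2/3*C := by
  have h : ∀ t ∈ Set.uIcc (-1:ℝ) 1, HasDerivAt (fun t : ℝ => A*t + B*t^2/2 + C*t^3/3)
      (A + B*t + C*t^2) t := by
    intro t _
    have h1 : HasDerivAt (fun t : ℝ => A*t + B*t^2/2 + C*t^3/3)
        (A*1 + B*(2*t^1)/2 + C*(3*t^2)/3) t := by
      exact (((hasDerivAt_id t).const_mul A).add
        (((hasDerivAt_pow 2 t).const_mul B).div_const 2)).add
        (((hasDerivAt_pow 3 t).const_mul C).div_const 3)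
    convert h1 using 1; ring
  rw [intervalIntegral.integral_eq_sub_of_hasDerivAt h
    ((Continuous.intervalIntegrable (by continuity) _ _))]
  ring


set_option maxHeartbeats 1600000 in
/-- Unisolvence of the tensor element `Q^x_K`: a polynomial `v ∈ Q^x` with
vanishing values at the eight vertices of `[−1,1]³` and vanishing integrals on
the four edges parallel to the x-axis is zero. -/
theorem Qx_unisolvent (v : M3) (hv : v ∈ Qx)
    (hvert : ∀ ε₁ ∈ ({-1, 1} : Set ℝ), ∀ ε₂ ∈ ({-1, 1} : Set ℝ), ∀ ε₃ ∈ ({-1, 1} : Set ℝ),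
      eval ![ε₁, ε₂, ε₃] v = 0)
    (hedge : ∀ ε ∈ ({-1, 1} : Set ℝ), ∀ δ ∈ ({-1, 1} : Set ℝ),
      (∫ t in (-1 : ℝ)..1, eval ![t, ε, δ] v) = 0) :
    v = 0 := by
  have hset : {p : M3 | ∃ i j k : ℕ, i ≤ 2 ∧ j ≤ 1 ∧ k ≤ 1 ∧ p = x ^ i * y ^ j * z ^ k}
      = Set.range gQ := by
    ext p
    constructor
    · rintro ⟨i, j, k, hi, hj, hk, rfl⟩
      exact ⟨(⟨i, by omega⟩, ⟨j, by omega⟩, ⟨k, by omega⟩), rfl⟩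
    · rintro ⟨⟨i, j, k⟩, rfl⟩
      exact ⟨i, j, k, by omega, by omega, by omega, rfl⟩
  rw [Qx, hset, Submodule.mem_span_range_iff_exists_fun] at hv
  obtain ⟨c, hc⟩ := hv
  rw [Fintype.sum_prod_type] at hc
  simp only [Fin.sum_univ_three, Fintype.sum_prod_type, Fin.sum_univ_two, gQ] at hc
  set q000 : ℝ := c (0,0,0) with hq000
  set q001 : ℝ := c (0,0,1) with hq001
  set q010 : ℝ := c (0,1,0) with hq010
  set q011 : ℝ := c (0,1,1) with hq011
  set q100 : ℝ := c (1,0,0) with hq100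
  set q101 : ℝ := c (1,0,1) with hq101
  set q110 : ℝ := c (1,1,0) with hq110
  set q111 : ℝ := c (1,1,1) with hq111
  set q200 : ℝ := c (2,0,0) with hq200
  set q201 : ℝ := c (2,0,1) with hq201
  set q210 : ℝ := c (2,1,0) with hq210
  set q211 : ℝ := c (2,1,1) with hq211
  have he : ∀ a b d : ℝ, eval ![a, b, d] v =
      q000 + q001 * d + q010 * b + q011 * (b*d)
      + (q100 + q101 * d + q110 * b + q111 * (b*d)) * a
      + (q200 + q201 * d + q210 * b + q211 * (b*d)) * a^2 := by
    intro a b d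
    rw [← hc]
    simp [x, y, z]
    ring
  have hm : (-1 : ℝ) ∈ ({-1, 1} : Set ℝ) := by simp
  have hp : (1 : ℝ) ∈ ({-1, 1} : Set ℝ) := by simp
  have hkey : ∀ ε δ : ℝ,
      (∫ t in (-1:ℝ)..1, eval ![t, ε, δ] v) =
      2 * (q000 + q001 * δ + q010 * ε + q011 * (ε*δ))
      + 2/3 * (q200 + q201 * δ + q210 * ε + q211 * (ε*δ)) := by
    intro ε δ
    rw [intervalIntegral.integral_congr
      (g := fun t : ℝ => (q000 + q001 * δ + q010 * ε + q011 * (ε*δ))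
        + (q100 + q101 * δ + q110 * ε + q111 * (ε*δ)) * t
        + (q200 + q201 * δ + q210 * ε + q211 * (ε*δ)) * t^2)
      (fun t _ => by rw [he]), int_helper]
  have e1 := hvert _ hm _ hm _ hm; rw [he] at e1
  have e2 := hvert _ hm _ hm _ hp; rw [he] at e2
  have e3 := hvert _ hm _ hp _ hm; rw [he] at e3
  have e4 := hvert _ hm _ hp _ hp; rw [he] at e4
  have e5 := hvert _ hp _ hm _ hm; rw [he] at e5
  have e6 := hvert _ hp _ hm _ hp; rw [he] at e6
  have e7 := hvert _ hp _ hp _ hm; rw [he] at e7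
  have e8 := hvert _ hp _ hp _ hp; rw [he] at e8
  have f1 := hedge _ hm _ hm; rw [hkey] at f1
  have f2 := hedge _ hm _ hp; rw [hkey] at f2
  have f3 := hedge _ hp _ hm; rw [hkey] at f3
  have f4 := hedge _ hp _ hp; rw [hkey] at f4
  norm_num at e1 e2 e3 e4 e5 e6 e7 e8 f1 f2 f3 f4
  have h000 : q000 = 0 := by linarith
  have h001 : q001 = 0 := by linarith
  have h010 : q010 = 0 := by linarith
  have h011 : q011 = 0 := by linarith
  have h100 : q100 = 0 := by linarith
  have h101 : q101 = 0 := by linarith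
  have h110 : q110 = 0 := by linarith
  have h111 : q111 = 0 := by linarith
  have h200 : q200 = 0 := by linarith
  have h201 : q201 = 0 := by linarith
  have h210 : q210 = 0 := by linarith
  have h211 : q211 = 0 := by linarith
  rw [← hc]
  rw [h000, h001, h010, h011, h100, h101, h110, h111, h200, h201, h210, h211]
  simp

end
end

section
/- Unisolvence of the lowest-order 3D Adini element: Let Q₁ := span{x^i y^j z^k : 0 ≤ i,j,k ≤ 1} ⊂ ℝ[x,y,z] and S := Q₁ + x²·Q₁ + y²·Q₁ + z²·Q₁. If p ∈ S satisfies p(ε₁,ε₂,ε₃) = 0, (∂_x p)(ε₁,ε₂,ε₃) = 0, (∂_y p)(ε₁,ε₂,ε₃) = 0 and (∂_z p)(ε₁,ε₂,ε₃) = 0 at all eight vertices (ε₁,ε₂,ε₃) ∈ {−1,1}³, then p = 0. -/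
open MvPolynomial

noncomputable section

/-- The trilinear space `Q₁ := span{x^i y^j z^k : i, j, k ≤ 1}`. -/
def Q1 : Submodule ℝ M3 :=
  Submodule.span ℝ
    {p : M3 | ∃ i j k : ℕ, i ≤ 1 ∧ j ≤ 1 ∧ k ≤ 1 ∧ p = x ^ i * y ^ j * z ^ k}

/-- The lowest-order 3D Adini shape space `S := Q₁ + x²·Q₁ + y²·Q₁ + z²·Q₁`. -/
def S3 : Submodule ℝ M3 :=
  Q1 ⊔ Submodule.map (LinearMap.mulLeft ℝ (x ^ 2)) Q1 ⊔
    Submodule.map (LinearMap.mulLeft ℝ (y ^ 2)) Q1 ⊔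
    Submodule.map (LinearMap.mulLeft ℝ (z ^ 2)) Q1

lemma mem_Q1_rep (q : M3) (hq : q ∈ Q1) :
    ∃ a : Fin 8 → ℝ, q = C (a 0) * (1:M3) + C (a 1) * x + C (a 2) * y + C (a 3) * z +
      C (a 4) * (x*y) + C (a 5) * (x*z) + C (a 6) * (y*z) + C (a 7) * (x*y*z) := by
  have hle : Q1 ≤ Submodule.span ℝ (Set.range ![(1:M3), x, y, z, x*y, x*z, y*z, x*y*z]) := by
    apply Submodule.span_le.mpr
    rintro q ⟨i, j, k, hi, hj, hk, rfl⟩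
    apply Submodule.subset_span
    interval_cases i <;> interval_cases j <;> interval_cases k <;>
      simp only [pow_zero, pow_one, one_mul, mul_one] <;>
      first
        | exact ⟨0, rfl⟩ | exact ⟨1, rfl⟩ | exact ⟨2, rfl⟩ | exact ⟨3, rfl⟩
        | exact ⟨4, rfl⟩ | exact ⟨5, rfl⟩ | exact ⟨6, rfl⟩ | exact ⟨7, rfl⟩
  have := hle hq
  rw [Submodule.mem_span_range_iff_exists_fun] at this
  obtain ⟨c, hc⟩ := this
  refine ⟨c, ?_⟩
  rw [← hc, Fin.sum_univ_eight]
  have e5 : ![(1:M3), x, y, z, x*y, x*z, y*z, x*y*z] 5 = x*z := rfl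
  have e6 : ![(1:M3), x, y, z, x*y, x*z, y*z, x*y*z] 6 = y*z := rfl
  have e7 : ![(1:M3), x, y, z, x*y, x*z, y*z, x*y*z] 7 = x*y*z := rfl
  simp only [smul_eq_C_mul, Matrix.cons_val_zero, Matrix.cons_val_one, Matrix.head_cons,
    Matrix.cons_val_two, Matrix.tail_cons, Matrix.cons_val_three, Matrix.cons_val_four,
    e5, e6, e7]

set_option maxHeartbeats 4000000 in
/-- Unisolvence of the lowest-order 3D Adini element: if `p ∈ S` vanishes
together with its three first-order partial derivatives at all eight vertices
`(±1, ±1, ±1)` of `[−1,1]³`, then `p = 0`. -/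
theorem adini_3d_unisolvent (p : M3) (hp : p ∈ S3)
    (hval : ∀ ε₁ ∈ ({-1, 1} : Set ℝ), ∀ ε₂ ∈ ({-1, 1} : Set ℝ), ∀ ε₃ ∈ ({-1, 1} : Set ℝ),
      eval ![ε₁, ε₂, ε₃] p = 0)
    (hderiv : ∀ ε₁ ∈ ({-1, 1} : Set ℝ), ∀ ε₂ ∈ ({-1, 1} : Set ℝ), ∀ ε₃ ∈ ({-1, 1} : Set ℝ),
      ∀ i : Fin 3, eval ![ε₁, ε₂, ε₃] (pderiv i p) = 0) :
    p = 0 := by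
  rw [S3, Submodule.mem_sup] at hp
  obtain ⟨u₁, hu₁, w₃, hw₃, rfl⟩ := hp
  rw [Submodule.mem_sup] at hu₁
  obtain ⟨u₂, hu₂, w₂, hw₂, rfl⟩ := hu₁
  rw [Submodule.mem_sup] at hu₂
  obtain ⟨q₀, hq₀, w₁, hw₁, rfl⟩ := hu₂
  obtain ⟨q₁, hq₁, rfl⟩ := hw₁
  obtain ⟨q₂, hq₂, rfl⟩ := hw₂
  obtain ⟨q₃, hq₃, rfl⟩ := hw₃
  obtain ⟨a, rfl⟩ := mem_Q1_rep q₀ hq₀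
  obtain ⟨b, rfl⟩ := mem_Q1_rep q₁ hq₁
  obtain ⟨c, rfl⟩ := mem_Q1_rep q₂ hq₂
  obtain ⟨d, rfl⟩ := mem_Q1_rep q₃ hq₃
  have hv0 := hval (-1) (by norm_num) (-1) (by norm_num) (-1) (by norm_num)
  have hd0_0 := hderiv (-1) (by norm_num) (-1) (by norm_num) (-1) (by norm_num) 0
  have hd0_1 := hderiv (-1) (by norm_num) (-1) (by norm_num) (-1) (by norm_num) 1
  have hd0_2 := hderiv (-1) (by norm_num) (-1) (by norm_num) (-1) (by norm_num) 2
  have hv1 := hval (-1) (by norm_num) (-1) (by norm_num) (1) (by norm_num)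
  have hd1_0 := hderiv (-1) (by norm_num) (-1) (by norm_num) (1) (by norm_num) 0
  have hd1_1 := hderiv (-1) (by norm_num) (-1) (by norm_num) (1) (by norm_num) 1
  have hd1_2 := hderiv (-1) (by norm_num) (-1) (by norm_num) (1) (by norm_num) 2
  have hv2 := hval (-1) (by norm_num) (1) (by norm_num) (-1) (by norm_num)
  have hd2_0 := hderiv (-1) (by norm_num) (1) (by norm_num) (-1) (by norm_num) 0
  have hd2_1 := hderiv (-1) (by norm_num) (1) (by norm_num) (-1) (by norm_num) 1
  have hd2_2 := hderiv (-1) (by norm_num) (1) (by norm_num) (-1) (by norm_num) 2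
  have hv3 := hval (-1) (by norm_num) (1) (by norm_num) (1) (by norm_num)
  have hd3_0 := hderiv (-1) (by norm_num) (1) (by norm_num) (1) (by norm_num) 0
  have hd3_1 := hderiv (-1) (by norm_num) (1) (by norm_num) (1) (by norm_num) 1
  have hd3_2 := hderiv (-1) (by norm_num) (1) (by norm_num) (1) (by norm_num) 2
  have hv4 := hval (1) (by norm_num) (-1) (by norm_num) (-1) (by norm_num)
  have hd4_0 := hderiv (1) (by norm_num) (-1) (by norm_num) (-1) (by norm_num) 0
  have hd4_1 := hderiv (1) (by norm_num) (-1) (by norm_num) (-1) (by norm_num) 1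
  have hd4_2 := hderiv (1) (by norm_num) (-1) (by norm_num) (-1) (by norm_num) 2
  have hv5 := hval (1) (by norm_num) (-1) (by norm_num) (1) (by norm_num)
  have hd5_0 := hderiv (1) (by norm_num) (-1) (by norm_num) (1) (by norm_num) 0
  have hd5_1 := hderiv (1) (by norm_num) (-1) (by norm_num) (1) (by norm_num) 1
  have hd5_2 := hderiv (1) (by norm_num) (-1) (by norm_num) (1) (by norm_num) 2
  have hv6 := hval (1) (by norm_num) (1) (by norm_num) (-1) (by norm_num)
  have hd6_0 := hderiv (1) (by norm_num) (1) (by norm_num) (-1) (by norm_num) 0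
  have hd6_1 := hderiv (1) (by norm_num) (1) (by norm_num) (-1) (by norm_num) 1
  have hd6_2 := hderiv (1) (by norm_num) (1) (by norm_num) (-1) (by norm_num) 2
  have hv7 := hval (1) (by norm_num) (1) (by norm_num) (1) (by norm_num)
  have hd7_0 := hderiv (1) (by norm_num) (1) (by norm_num) (1) (by norm_num) 0
  have hd7_1 := hderiv (1) (by norm_num) (1) (by norm_num) (1) (by norm_num) 1
  have hd7_2 := hderiv (1) (by norm_num) (1) (by norm_num) (1) (by norm_num) 2
  have ne01 : ((0:Fin 3) = 1) = False := by decide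
  have ne02 : ((0:Fin 3) = 2) = False := by decide
  have ne10 : ((1:Fin 3) = 0) = False := by decide
  have ne12 : ((1:Fin 3) = 2) = False := by decide
  have ne20 : ((2:Fin 3) = 0) = False := by decide
  have ne21 : ((2:Fin 3) = 1) = False := by decide
  norm_num [LinearMap.mulLeft_apply, map_add, map_smul, map_mul, map_pow, map_one, eval_C, pderiv_C_mul, eval_add, eval_mul, eval_pow, eval_X, pderiv_X, pderiv_C, pderiv_one, Pi.single_apply, eval_zero, mul_zero, zero_mul, mul_one, one_mul, add_zero, zero_add, Fin.isValue, x, y, z, pderiv_mul, Derivation.leibniz_pow, Derivation.leibniz, Matrix.cons_val_zero, Matrix.cons_val_one, Matrix.head_cons, Matrix.cons_val_two, Matrix.tail_cons, smul_eq_mul, nsmul_eq_mul, ne01, ne02, ne10, ne12, ne20, ne21] at hv0 hd0_0 hd0_1 hd0_2 hv1 hd1_0 hd1_1 hd1_2 hv2 hd2_0 hd2_1 hd2_2 hv3 hd3_0 hd3_1 hd3_2 hv4 hd4_0 hd4_1 hd4_2 hv5 hd5_0 hd5_1 hd5_2 hv6 hd6_0 hd6_1 hd6_2 hv7 hd7_0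 hd7_1 hd7_2
  have h0 : a 0 = 0 := by linear_combination (1/8 : ℝ) * hv0 + (1/16 : ℝ) * hd0_0 + (1/16 : ℝ) * hd0_1 + (1/16 : ℝ) * hd0_2 + (1/8 : ℝ) * hv1 + (1/16 : ℝ) * hd1_0 + (1/16 : ℝ) * hd1_1 + (-1/16 : ℝ) * hd1_2 + (1/8 : ℝ) * hv2 + (1/16 : ℝ) * hd2_0 + (-1/16 : ℝ) * hd2_1 + (1/16 : ℝ) * hd2_2 + (1/8 : ℝ) * hv3 + (1/16 : ℝ) * hd3_0 + (-1/16 : ℝ) * hd3_1 + (-1/16 : ℝ) * hd3_2 + (1/8 : ℝ) * hv4 + (-1/16 : ℝ) * hd4_0 + (1/16 : ℝ) * hd4_1 + (1/16 : ℝ) * hd4_2 + (1/8 : ℝ) * hv5 + (-1/16 : ℝ) * hd5_0 + (1/16 : ℝ) * hd5_1 + (-1/16 : ℝ) * hd5_2 + (1/8 : ℝ) * hv6 + (-1/16 : ℝ) * hd6_0 + (-1/16 : ℝ) * hd6_1 + (1/16 : ℝ) * hd6_2 + (1/8 : ℝ) * hv7 + (-1/16 : ℝ) * hd7_0 + (-1/16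 : ℝ) * hd7_1 + (-1/16 : ℝ) * hd7_2
  have h1 : a 1 = 0 := by linear_combination (-3/16 : ℝ) * hv0 + (-1/16 : ℝ) * hd0_0 + (-1/16 : ℝ) * hd0_1 + (-1/16 : ℝ) * hd0_2 + (-3/16 : ℝ) * hv1 + (-1/16 : ℝ) * hd1_0 + (-1/16 : ℝ) * hd1_1 + (1/16 : ℝ) * hd1_2 + (-3/16 : ℝ) * hv2 + (-1/16 : ℝ) * hd2_0 + (1/16 : ℝ) * hd2_1 + (-1/16 : ℝ) * hd2_2 + (-3/16 : ℝ) * hv3 + (-1/16 : ℝ) * hd3_0 + (1/16 : ℝ) * hd3_1 + (1/16 : ℝ) * hd3_2 + (3/16 : ℝ) * hv4 + (-1/16 : ℝ) * hd4_0 + (1/16 : ℝ) * hd4_1 + (1/16 : ℝ) * hd4_2 + (3/16 : ℝ) * hv5 + (-1/16 : ℝ) * hd5_0 + (1/16 : ℝ) * hd5_1 + (-1/16 : ℝ) * hd5_2 + (3/16 : ℝ) * hv6 + (-1/16 : ℝ) * hd6_0 + (-1/16 : ℝ) * hd6_1 + (1/16 : ℝ) * hd6_2 + (3/16 : ℝ)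 * hv7 + (-1/16 : ℝ) * hd7_0 + (-1/16 : ℝ) * hd7_1 + (-1/16 : ℝ) * hd7_2
  have h2 : a 2 = 0 := by linear_combination (-3/16 : ℝ) * hv0 + (-1/16 : ℝ) * hd0_0 + (-1/16 : ℝ) * hd0_1 + (-1/16 : ℝ) * hd0_2 + (-3/16 : ℝ) * hv1 + (-1/16 : ℝ) * hd1_0 + (-1/16 : ℝ) * hd1_1 + (1/16 : ℝ) * hd1_2 + (3/16 : ℝ) * hv2 + (1/16 : ℝ) * hd2_0 + (-1/16 : ℝ) * hd2_1 + (1/16 : ℝ) * hd2_2 + (3/16 : ℝ) * hv3 + (1/16 : ℝ) * hd3_0 + (-1/16 : ℝ) * hd3_1 + (-1/16 : ℝ) * hd3_2 + (-3/16 : ℝ) * hv4 + (1/16 : ℝ) * hd4_0 + (-1/16 : ℝ) * hd4_1 + (-1/16 : ℝ) * hd4_2 + (-3/16 : ℝ) * hv5 + (1/16 : ℝ) * hd5_0 + (-1/16 : ℝ) * hd5_1 + (1/16 : ℝ) * hd5_2 + (3/16 : ℝ) * hv6 + (-1/16 : ℝ) * hd6_0 + (-1/16 : ℝ) * hd6_1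 + (1/16 : ℝ) * hd6_2 + (3/16 : ℝ) * hv7 + (-1/16 : ℝ) * hd7_0 + (-1/16 : ℝ) * hd7_1 + (-1/16 : ℝ) * hd7_2
  have h3 : a 3 = 0 := by linear_combination (-3/16 : ℝ) * hv0 + (-1/16 : ℝ) * hd0_0 + (-1/16 : ℝ) * hd0_1 + (-1/16 : ℝ) * hd0_2 + (3/16 : ℝ) * hv1 + (1/16 : ℝ) * hd1_0 + (1/16 : ℝ) * hd1_1 + (-1/16 : ℝ) * hd1_2 + (-3/16 : ℝ) * hv2 + (-1/16 : ℝ) * hd2_0 + (1/16 : ℝ) * hd2_1 + (-1/16 : ℝ) * hd2_2 + (3/16 : ℝ) * hv3 + (1/16 : ℝ) * hd3_0 + (-1/16 : ℝ) * hd3_1 + (-1/16 : ℝ) * hd3_2 + (-3/16 : ℝ) * hv4 + (1/16 : ℝ) * hd4_0 + (-1/16 : ℝ) * hd4_1 + (-1/16 : ℝ) * hd4_2 + (3/16 : ℝ) * hv5 + (-1/16 : ℝ) * hd5_0 + (1/16 : ℝ) * hd5_1 + (-1/16 : ℝ) * hd5_2 + (-3/16 : ℝ) * hv6 + (1/16 :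 ℝ) * hd6_0 + (1/16 : ℝ) * hd6_1 + (-1/16 : ℝ) * hd6_2 + (3/16 : ℝ) * hv7 + (-1/16 : ℝ) * hd7_0 + (-1/16 : ℝ) * hd7_1 + (-1/16 : ℝ) * hd7_2
  have h4 : a 4 = 0 := by linear_combination (1/4 : ℝ) * hv0 + (1/16 : ℝ) * hd0_0 + (1/16 : ℝ) * hd0_1 + (1/16 : ℝ) * hd0_2 + (1/4 : ℝ) * hv1 + (1/16 : ℝ) * hd1_0 + (1/16 : ℝ) * hd1_1 + (-1/16 : ℝ) * hd1_2 + (-1/4 : ℝ) * hv2 + (-1/16 : ℝ) * hd2_0 + (1/16 : ℝ) * hd2_1 + (-1/16 : ℝ) * hd2_2 + (-1/4 : ℝ) * hv3 + (-1/16 : ℝ) * hd3_0 + (1/16 : ℝ) * hd3_1 + (1/16 : ℝ) * hd3_2 + (-1/4 : ℝ) * hv4 + (1/16 : ℝ) * hd4_0 + (-1/16 : ℝ) * hd4_1 + (-1/16 : ℝ) * hd4_2 + (-1/4 : ℝ) * hv5 + (1/16 : ℝ) * hd5_0 + (-1/16 : ℝ) * hd5_1 + (1/16 : ℝ) * hd5_2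 + (1/4 : ℝ) * hv6 + (-1/16 : ℝ) * hd6_0 + (-1/16 : ℝ) * hd6_1 + (1/16 : ℝ) * hd6_2 + (1/4 : ℝ) * hv7 + (-1/16 : ℝ) * hd7_0 + (-1/16 : ℝ) * hd7_1 + (-1/16 : ℝ) * hd7_2
  have h5 : a 5 = 0 := by linear_combination (1/4 : ℝ) * hv0 + (1/16 : ℝ) * hd0_0 + (1/16 : ℝ) * hd0_1 + (1/16 : ℝ) * hd0_2 + (-1/4 : ℝ) * hv1 + (-1/16 : ℝ) * hd1_0 + (-1/16 : ℝ) * hd1_1 + (1/16 : ℝ) * hd1_2 + (1/4 : ℝ) * hv2 + (1/16 : ℝ) * hd2_0 + (-1/16 : ℝ) * hd2_1 + (1/16 : ℝ) * hd2_2 + (-1/4 : ℝ) * hv3 + (-1/16 : ℝ) * hd3_0 + (1/16 : ℝ) * hd3_1 + (1/16 : ℝ) * hd3_2 + (-1/4 : ℝ) * hv4 + (1/16 : ℝ) * hd4_0 + (-1/16 : ℝ) * hd4_1 + (-1/16 : ℝ) * hd4_2 + (1/4 : ℝ) * hv5 + (-1/16 : ℝ) * hd5_0 + (1/16 : ℝ)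 * hd5_1 + (-1/16 : ℝ) * hd5_2 + (-1/4 : ℝ) * hv6 + (1/16 : ℝ) * hd6_0 + (1/16 : ℝ) * hd6_1 + (-1/16 : ℝ) * hd6_2 + (1/4 : ℝ) * hv7 + (-1/16 : ℝ) * hd7_0 + (-1/16 : ℝ) * hd7_1 + (-1/16 : ℝ) * hd7_2
  have h6 : a 6 = 0 := by linear_combination (1/4 : ℝ) * hv0 + (1/16 : ℝ) * hd0_0 + (1/16 : ℝ) * hd0_1 + (1/16 : ℝ) * hd0_2 + (-1/4 : ℝ) * hv1 + (-1/16 : ℝ) * hd1_0 + (-1/16 : ℝ) * hd1_1 + (1/16 : ℝ) * hd1_2 + (-1/4 : ℝ) * hv2 + (-1/16 : ℝ) * hd2_0 + (1/16 : ℝ) * hd2_1 + (-1/16 : ℝ) * hd2_2 + (1/4 : ℝ) * hv3 + (1/16 : ℝ) * hd3_0 + (-1/16 : ℝ) * hd3_1 + (-1/16 : ℝ) * hd3_2 + (1/4 : ℝ) * hv4 + (-1/16 : ℝ) * hd4_0 + (1/16 : ℝ) * hd4_1 + (1/16 : ℝ) * hd4_2 + (-1/4 : ℝ) * hv5 + (1/16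 : ℝ) * hd5_0 + (-1/16 : ℝ) * hd5_1 + (1/16 : ℝ) * hd5_2 + (-1/4 : ℝ) * hv6 + (1/16 : ℝ) * hd6_0 + (1/16 : ℝ) * hd6_1 + (-1/16 : ℝ) * hd6_2 + (1/4 : ℝ) * hv7 + (-1/16 : ℝ) * hd7_0 + (-1/16 : ℝ) * hd7_1 + (-1/16 : ℝ) * hd7_2
  have h7 : a 7 = 0 := by linear_combination (-5/16 : ℝ) * hv0 + (-1/16 : ℝ) * hd0_0 + (-1/16 : ℝ) * hd0_1 + (-1/16 : ℝ) * hd0_2 + (5/16 : ℝ) * hv1 + (1/16 : ℝ) * hd1_0 + (1/16 : ℝ) * hd1_1 + (-1/16 : ℝ) * hd1_2 + (5/16 : ℝ) * hv2 + (1/16 : ℝ) * hd2_0 + (-1/16 : ℝ) * hd2_1 + (1/16 : ℝ) * hd2_2 + (-5/16 : ℝ) * hv3 + (-1/16 : ℝ) * hd3_0 + (1/16 : ℝ) * hd3_1 + (1/16 : ℝ) * hd3_2 + (5/16 : ℝ) * hv4 + (-1/16 : ℝ) * hd4_0 + (1/16 : ℝ) * hd4_1 + (1/16 : ℝ) * hd4_2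 + (-5/16 : ℝ) * hv5 + (1/16 : ℝ) * hd5_0 + (-1/16 : ℝ) * hd5_1 + (1/16 : ℝ) * hd5_2 + (-5/16 : ℝ) * hv6 + (1/16 : ℝ) * hd6_0 + (1/16 : ℝ) * hd6_1 + (-1/16 : ℝ) * hd6_2 + (5/16 : ℝ) * hv7 + (-1/16 : ℝ) * hd7_0 + (-1/16 : ℝ) * hd7_1 + (-1/16 : ℝ) * hd7_2
  have h8 : b 0 = 0 := by linear_combination (-1/16 : ℝ) * hd0_0 + (-1/16 : ℝ) * hd1_0 + (-1/16 : ℝ) * hd2_0 + (-1/16 : ℝ) * hd3_0 + (1/16 : ℝ) * hd4_0 + (1/16 : ℝ) * hd5_0 + (1/16 : ℝ) * hd6_0 + (1/16 : ℝ) * hd7_0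
  have h9 : b 1 = 0 := by linear_combination (1/16 : ℝ) * hv0 + (1/16 : ℝ) * hd0_0 + (1/16 : ℝ) * hv1 + (1/16 : ℝ) * hd1_0 + (1/16 : ℝ) * hv2 + (1/16 : ℝ) * hd2_0 + (1/16 : ℝ) * hv3 + (1/16 : ℝ) * hd3_0 + (-1/16 : ℝ) * hv4 + (1/16 : ℝ) * hd4_0 + (-1/16 : ℝ) * hv5 + (1/16 : ℝ) * hd5_0 + (-1/16 : ℝ) * hv6 + (1/16 : ℝ) * hd6_0 + (-1/16 : ℝ) * hv7 + (1/16 : ℝ) * hd7_0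
  have h10 : b 2 = 0 := by linear_combination (1/16 : ℝ) * hd0_0 + (1/16 : ℝ) * hd1_0 + (-1/16 : ℝ) * hd2_0 + (-1/16 : ℝ) * hd3_0 + (-1/16 : ℝ) * hd4_0 + (-1/16 : ℝ) * hd5_0 + (1/16 : ℝ) * hd6_0 + (1/16 : ℝ) * hd7_0
  have h11 : b 3 = 0 := by linear_combination (1/16 : ℝ) * hd0_0 + (-1/16 : ℝ) * hd1_0 + (1/16 : ℝ) * hd2_0 + (-1/16 : ℝ) * hd3_0 + (-1/16 : ℝ) * hd4_0 + (1/16 : ℝ) * hd5_0 + (-1/16 : ℝ) * hd6_0 + (1/16 : ℝ) * hd7_0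
  have h12 : b 4 = 0 := by linear_combination (-1/16 : ℝ) * hv0 + (-1/16 : ℝ) * hd0_0 + (-1/16 : ℝ) * hv1 + (-1/16 : ℝ) * hd1_0 + (1/16 : ℝ) * hv2 + (1/16 : ℝ) * hd2_0 + (1/16 : ℝ) * hv3 + (1/16 : ℝ) * hd3_0 + (1/16 : ℝ) * hv4 + (-1/16 : ℝ) * hd4_0 + (1/16 : ℝ) * hv5 + (-1/16 : ℝ) * hd5_0 + (-1/16 : ℝ) * hv6 + (1/16 : ℝ) * hd6_0 + (-1/16 : ℝ) * hv7 + (1/16 : ℝ) * hd7_0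
  have h13 : b 5 = 0 := by linear_combination (-1/16 : ℝ) * hv0 + (-1/16 : ℝ) * hd0_0 + (1/16 : ℝ) * hv1 + (1/16 : ℝ) * hd1_0 + (-1/16 : ℝ) * hv2 + (-1/16 : ℝ) * hd2_0 + (1/16 : ℝ) * hv3 + (1/16 : ℝ) * hd3_0 + (1/16 : ℝ) * hv4 + (-1/16 : ℝ) * hd4_0 + (-1/16 : ℝ) * hv5 + (1/16 : ℝ) * hd5_0 + (1/16 : ℝ) * hv6 + (-1/16 : ℝ) * hd6_0 + (-1/16 : ℝ) * hv7 + (1/16 : ℝ) * hd7_0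
  have h14 : b 6 = 0 := by linear_combination (-1/16 : ℝ) * hd0_0 + (1/16 : ℝ) * hd1_0 + (1/16 : ℝ) * hd2_0 + (-1/16 : ℝ) * hd3_0 + (1/16 : ℝ) * hd4_0 + (-1/16 : ℝ) * hd5_0 + (-1/16 : ℝ) * hd6_0 + (1/16 : ℝ) * hd7_0
  have h15 : b 7 = 0 := by linear_combination (1/16 : ℝ) * hv0 + (1/16 : ℝ) * hd0_0 + (-1/16 : ℝ) * hv1 + (-1/16 : ℝ) * hd1_0 + (-1/16 : ℝ) * hv2 + (-1/16 : ℝ) * hd2_0 + (1/16 : ℝ) * hv3 + (1/16 : ℝ) * hd3_0 + (-1/16 : ℝ) * hv4 + (1/16 : ℝ) * hd4_0 + (1/16 : ℝ) * hv5 + (-1/16 : ℝ) * hd5_0 + (1/16 : ℝ) * hv6 + (-1/16 : ℝ) * hd6_0 + (-1/16 : ℝ) * hv7 + (1/16 : ℝ) * hd7_0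
  have h16 : c 0 = 0 := by linear_combination (-1/16 : ℝ) * hd0_1 + (-1/16 : ℝ) * hd1_1 + (1/16 : ℝ) * hd2_1 + (1/16 : ℝ) * hd3_1 + (-1/16 : ℝ) * hd4_1 + (-1/16 : ℝ) * hd5_1 + (1/16 : ℝ) * hd6_1 + (1/16 : ℝ) * hd7_1
  have h17 : c 1 = 0 := by linear_combination (1/16 : ℝ) * hd0_1 + (1/16 : ℝ) * hd1_1 + (-1/16 : ℝ) * hd2_1 + (-1/16 : ℝ) * hd3_1 + (-1/16 : ℝ) * hd4_1 + (-1/16 : ℝ) * hd5_1 + (1/16 : ℝ) * hd6_1 + (1/16 : ℝ) * hd7_1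
  have h18 : c 2 = 0 := by linear_combination (1/16 : ℝ) * hv0 + (1/16 : ℝ) * hd0_1 + (1/16 : ℝ) * hv1 + (1/16 : ℝ) * hd1_1 + (-1/16 : ℝ) * hv2 + (1/16 : ℝ) * hd2_1 + (-1/16 : ℝ) * hv3 + (1/16 : ℝ) * hd3_1 + (1/16 : ℝ) * hv4 + (1/16 : ℝ) * hd4_1 + (1/16 : ℝ) * hv5 + (1/16 : ℝ) * hd5_1 + (-1/16 : ℝ) * hv6 + (1/16 : ℝ) * hd6_1 + (-1/16 : ℝ) * hv7 + (1/16 : ℝ) * hd7_1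
  have h19 : c 3 = 0 := by linear_combination (1/16 : ℝ) * hd0_1 + (-1/16 : ℝ) * hd1_1 + (-1/16 : ℝ) * hd2_1 + (1/16 : ℝ) * hd3_1 + (1/16 : ℝ) * hd4_1 + (-1/16 : ℝ) * hd5_1 + (-1/16 : ℝ) * hd6_1 + (1/16 : ℝ) * hd7_1
  have h20 : c 4 = 0 := by linear_combination (-1/16 : ℝ) * hv0 + (-1/16 : ℝ) * hd0_1 + (-1/16 : ℝ) * hv1 + (-1/16 : ℝ) * hd1_1 + (1/16 : ℝ) * hv2 + (-1/16 : ℝ) * hd2_1 + (1/16 : ℝ) * hv3 + (-1/16 : ℝ) * hd3_1 + (1/16 : ℝ) * hv4 + (1/16 : ℝ) * hd4_1 + (1/16 : ℝ) * hv5 + (1/16 : ℝ) * hd5_1 + (-1/16 : ℝ) * hv6 + (1/16 : ℝ) * hd6_1 + (-1/16 : ℝ) * hv7 + (1/16 : ℝ) * hd7_1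
  have h21 : c 5 = 0 := by linear_combination (-1/16 : ℝ) * hd0_1 + (1/16 : ℝ) * hd1_1 + (1/16 : ℝ) * hd2_1 + (-1/16 : ℝ) * hd3_1 + (1/16 : ℝ) * hd4_1 + (-1/16 : ℝ) * hd5_1 + (-1/16 : ℝ) * hd6_1 + (1/16 : ℝ) * hd7_1
  have h22 : c 6 = 0 := by linear_combination (-1/16 : ℝ) * hv0 + (-1/16 : ℝ) * hd0_1 + (1/16 : ℝ) * hv1 + (1/16 : ℝ) * hd1_1 + (1/16 : ℝ) * hv2 + (-1/16 : ℝ) * hd2_1 + (-1/16 : ℝ) * hv3 + (1/16 : ℝ) * hd3_1 + (-1/16 : ℝ) * hv4 + (-1/16 : ℝ) * hd4_1 + (1/16 : ℝ) * hv5 + (1/16 : ℝ) * hd5_1 + (1/16 : ℝ) * hv6 + (-1/16 : ℝ) * hd6_1 + (-1/16 : ℝ) * hv7 + (1/16 : ℝ) * hd7_1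
  have h23 : c 7 = 0 := by linear_combination (1/16 : ℝ) * hv0 + (1/16 : ℝ) * hd0_1 + (-1/16 : ℝ) * hv1 + (-1/16 : ℝ) * hd1_1 + (-1/16 : ℝ) * hv2 + (1/16 : ℝ) * hd2_1 + (1/16 : ℝ) * hv3 + (-1/16 : ℝ) * hd3_1 + (-1/16 : ℝ) * hv4 + (-1/16 : ℝ) * hd4_1 + (1/16 : ℝ) * hv5 + (1/16 : ℝ) * hd5_1 + (1/16 : ℝ) * hv6 + (-1/16 : ℝ) * hd6_1 + (-1/16 : ℝ) * hv7 + (1/16 : ℝ) * hd7_1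
  have h24 : d 0 = 0 := by linear_combination (-1/16 : ℝ) * hd0_2 + (1/16 : ℝ) * hd1_2 + (-1/16 : ℝ) * hd2_2 + (1/16 : ℝ) * hd3_2 + (-1/16 : ℝ) * hd4_2 + (1/16 : ℝ) * hd5_2 + (-1/16 : ℝ) * hd6_2 + (1/16 : ℝ) * hd7_2
  have h25 : d 1 = 0 := by linear_combination (1/16 : ℝ) * hd0_2 + (-1/16 : ℝ) * hd1_2 + (1/16 : ℝ) * hd2_2 + (-1/16 : ℝ) * hd3_2 + (-1/16 : ℝ) * hd4_2 + (1/16 : ℝ) * hd5_2 + (-1/16 : ℝ) * hd6_2 + (1/16 : ℝ) * hd7_2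
  have h26 : d 2 = 0 := by linear_combination (1/16 : ℝ) * hd0_2 + (-1/16 : ℝ) * hd1_2 + (-1/16 : ℝ) * hd2_2 + (1/16 : ℝ) * hd3_2 + (1/16 : ℝ) * hd4_2 + (-1/16 : ℝ) * hd5_2 + (-1/16 : ℝ) * hd6_2 + (1/16 : ℝ) * hd7_2
  have h27 : d 3 = 0 := by linear_combination (1/16 : ℝ) * hv0 + (1/16 : ℝ) * hd0_2 + (-1/16 : ℝ) * hv1 + (1/16 : ℝ) * hd1_2 + (1/16 : ℝ) * hv2 + (1/16 : ℝ) * hd2_2 + (-1/16 : ℝ) * hv3 + (1/16 : ℝ) * hd3_2 + (1/16 : ℝ) * hv4 + (1/16 : ℝ) * hd4_2 + (-1/16 : ℝ) * hv5 + (1/16 : ℝ) * hd5_2 + (1/16 : ℝ) * hv6 + (1/16 : ℝ) * hd6_2 + (-1/16 : ℝ) * hv7 + (1/16 : ℝ) * hd7_2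
  have h28 : d 4 = 0 := by linear_combination (-1/16 : ℝ) * hd0_2 + (1/16 : ℝ) * hd1_2 + (1/16 : ℝ) * hd2_2 + (-1/16 : ℝ) * hd3_2 + (1/16 : ℝ) * hd4_2 + (-1/16 : ℝ) * hd5_2 + (-1/16 : ℝ) * hd6_2 + (1/16 : ℝ) * hd7_2
  have h29 : d 5 = 0 := by linear_combination (-1/16 : ℝ) * hv0 + (-1/16 : ℝ) * hd0_2 + (1/16 : ℝ) * hv1 + (-1/16 : ℝ) * hd1_2 + (-1/16 : ℝ) * hv2 + (-1/16 : ℝ) * hd2_2 + (1/16 : ℝ) * hv3 + (-1/16 : ℝ) * hd3_2 + (1/16 : ℝ) * hv4 + (1/16 : ℝ) * hd4_2 + (-1/16 : ℝ) * hv5 + (1/16 : ℝ) * hd5_2 + (1/16 : ℝ) * hv6 + (1/16 : ℝ) * hd6_2 + (-1/16 : ℝ) * hv7 + (1/16 : ℝ) * hd7_2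
  have h30 : d 6 = 0 := by linear_combination (-1/16 : ℝ) * hv0 + (-1/16 : ℝ) * hd0_2 + (1/16 : ℝ) * hv1 + (-1/16 : ℝ) * hd1_2 + (1/16 : ℝ) * hv2 + (1/16 : ℝ) * hd2_2 + (-1/16 : ℝ) * hv3 + (1/16 : ℝ) * hd3_2 + (-1/16 : ℝ) * hv4 + (-1/16 : ℝ) * hd4_2 + (1/16 : ℝ) * hv5 + (-1/16 : ℝ) * hd5_2 + (1/16 : ℝ) * hv6 + (1/16 : ℝ) * hd6_2 + (-1/16 : ℝ) * hv7 + (1/16 : ℝ) * hd7_2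
  have h31 : d 7 = 0 := by linear_combination (1/16 : ℝ) * hv0 + (1/16 : ℝ) * hd0_2 + (-1/16 : ℝ) * hv1 + (1/16 : ℝ) * hd1_2 + (-1/16 : ℝ) * hv2 + (-1/16 : ℝ) * hd2_2 + (1/16 : ℝ) * hv3 + (-1/16 : ℝ) * hd3_2 + (-1/16 : ℝ) * hv4 + (-1/16 : ℝ) * hd4_2 + (1/16 : ℝ) * hv5 + (-1/16 : ℝ) * hd5_2 + (1/16 : ℝ) * hv6 + (1/16 : ℝ) * hd6_2 + (-1/16 : ℝ) * hv7 + (1/16 : ℝ) * hd7_2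
  simp only [h0, h1, h2, h3, h4, h5, h6, h7, h8, h9, h10, h11, h12, h13, h14, h15, h16, h17, h18, h19, h20, h21, h22, h23, h24, h25, h26, h27, h28, h29, h30, h31, map_zero, zero_mul, mul_zero, add_zero, zero_add, mul_one]
end
end
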